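/- The map x : ℂ \ {0} → ℝ⁴, x(z) = 2 Re( z + (t²+1)/z, −i(z + (t²−1)/z), 2 Log z, 2t/z ) with parameter t ∈ (−1,1), t treated as fixed and Log any fixed continuous branch — precisely: the real-analytic map whose components are x₁ = 2Re(z + (t²+1)/z), x₂ = 2Re(−i(z+(t²−1)/z)), x₃ = 4 ln|z|, x₄ = 2Re(2t/z) — is injective on ℂ \ {0}. -/

import Mathlib

open Complex

/-- The generalized catenoid `x : ℂ \ {0} → ℝ⁴` with parameter `t`, with components
`x₁ = 2 Re(z + (t²+1)/z)`, `x₂ = 2 Re(-i(z + (t²-1)/z))`, `x₃ = 4 ln|z|`,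
`x₄ = 2 Re(2t/z)`. -/
noncomputable def genCatenoid (t : ℝ) (z : ℂ) : ℝ × ℝ × ℝ × ℝ :=
  ((2 * (z + ((t : ℂ) ^ 2 + 1) / z).re),
   (2 * (-I * (z + ((t : ℂ) ^ 2 - 1) / z)).re),
   4 * Real.log ‖z‖,
   (2 * (2 * (t : ℂ) / z).re))

/-!
The third component `4 ln|z|` fixes `r = |z|`. For `c` real, `z + c/z = z + c z̄ / r²`, so on the
circle of radius `r` the real and imaginary parts of `z + c/z` are `Re z` and `Im z` scaled by
`1 + c/r²` and `1 - c/r²`. With `c = t² + 1` and `c = t² - 1` both factors are positive when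
`|t| < 1`, so the first two components recover `Re z` and `Im z`.
-/

namespace Complex

theorem re_add_ofReal_div (c : ℝ) (z : ℂ) : (z + c / z).re = z.re * (1 + c / normSq z) := by
  simp only [add_re, div_re, ofReal_re, ofReal_im]
  ring

theorem im_add_ofReal_div (c : ℝ) (z : ℂ) : (z + c / z).im = z.im * (1 - c / normSq z) := by
  simp only [add_im, div_im, ofReal_re, ofReal_im]
  ring

theorem re_eq_of_re_add_ofReal_div_eq {c : ℝ} {z w : ℂ} (hzw : normSq z = normSq w)
    (hc : 1 + c / normSq z ≠ 0) (h : (z + c / z).re = (w + c / w).re) : z.re = w.re := by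
  rw [re_add_ofReal_div, re_add_ofReal_div, ← hzw] at h
  exact mul_right_cancel₀ hc h

theorem im_eq_of_im_add_ofReal_div_eq {c : ℝ} {z w : ℂ} (hzw : normSq z = normSq w)
    (hc : 1 - c / normSq z ≠ 0) (h : (z + c / z).im = (w + c / w).im) : z.im = w.im := by
  rw [im_add_ofReal_div, im_add_ofReal_div, ← hzw] at h
  exact mul_right_cancel₀ hc h

end Complex

/-- For `t ∈ (-1, 1)`, the generalized catenoid is injective on `ℂ \ {0}`. -/
theorem stmt14 (t : ℝ) (ht : -1 < t) (ht' : t < 1) :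
    ∀ z w : ℂ, z ≠ 0 → w ≠ 0 → genCatenoid t z = genCatenoid t w → z = w := by
  intro z w hz hw h
  simp only [genCatenoid, Prod.mk.injEq] at h
  obtain ⟨h₁, h₂, h₃, -⟩ := h
  have hnorm : ‖z‖ = ‖w‖ :=
    Real.log_injOn_pos (norm_pos_iff.mpr hz) (norm_pos_iff.mpr hw) (by linarith)
  have hnormSq : normSq z = normSq w := by rw [← Complex.sq_norm, ← Complex.sq_norm, hnorm]
  have hpos : 0 < normSq z := normSq_pos.mpr hz
  have ht_sq : t ^ 2 - 1 < 0 := by nlinarith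
  refine Complex.ext (re_eq_of_re_add_ofReal_div_eq (c := t ^ 2 + 1) hnormSq ?_ ?_)
    (im_eq_of_im_add_ofReal_div_eq (c := t ^ 2 - 1) hnormSq ?_ ?_)
  · positivity
  · push_cast
    linarith
  · linarith [div_neg_of_neg_of_pos ht_sq hpos]
  · simp only [neg_mul, neg_re, I_mul_re, neg_neg] at h₂
    push_cast
    linarith
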